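/- Upper bound half of filtration stability: with the hypotheses of the subgroup-filtration stability theorem, if ψ²ⱼ = proj(ψ¹ᵢ, X²), then S²(ψ²ⱼ) ≤ S¹(ψ¹ᵢ) + ε. -/

import Mathlib

/-!
Suppose `S₂ (b₂ j) > S₁ (b₁ i) + ε`. Every `b₁ l` with `l ≤ i` has `S₂ (b₁ l) ≤ S₁ (b₁ i) + ε`,
so by Fact 2 for `S₂` it lies in the span of the `b₂ m` with `S₂ (b₂ m) ≤ S₁ (b₁ i) + ε`; since
the second basis is sorted, all these `m` are `< j`. Hence `psiFilt b₁ (i + 1) ≤ psiFilt b₂ j`,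
contradicting the minimality of `j + 1`.
-/

/-- The subgroup filtration associated to an ordered basis: `ψₙ = span(h₁,…,hₙ)`. -/
noncomputable def psiFilt {H : Type*} [AddCommGroup H] [Module (ZMod 2) H]
    {β : ℕ} (b : Module.Basis (Fin β) (ZMod 2) H) (n : ℕ) : Submodule (ZMod 2) H :=
  Submodule.span (ZMod 2) (b '' {j : Fin β | (j : ℕ) < n})

section

variable {H : Type*} [AddCommGroup H] [Module (ZMod 2) H] {β : ℕ}

theorem psiFilt_le_iff {b : Module.Basis (Fin β) (ZMod 2) H} {n : ℕ}
    {p : Submodule (ZMod 2) H} : psiFilt b n ≤ p ↔ ∀ l : Fin β, (l : ℕ) < n → b l ∈ p := by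
  simp only [psiFilt, Submodule.span_le, Set.image_subset_iff]
  rfl

theorem span_sublevel_le_psiFilt {b : Module.Basis (Fin β) (ZMod 2) H} {S : H → ℝ}
    (hsort : Monotone fun i => S (b i)) {t : ℝ} {j : Fin β} (ht : t < S (b j)) :
    Submodule.span (ZMod 2) (b '' {m | S (b m) ≤ t}) ≤ psiFilt b j :=
  Submodule.span_mono <| Set.image_mono fun _ hm => hsort.reflect_lt (hm.trans_lt ht)

end

theorem filtration_stability_upper_general {H : Type*} [AddCommGroup H] [Module (ZMod 2) H] {β : ℕ}
    (S₁ S₂ : H → ℝ) (ε : ℝ)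
    (hpt : ∀ h : H, |S₁ h - S₂ h| ≤ ε)
    (b₁ b₂ : Module.Basis (Fin β) (ZMod 2) H)
    (hsort₁ : Monotone fun i => S₁ (b₁ i))
    (hsort₂ : Monotone fun i => S₂ (b₂ i))
    (hfact2₂ : ∀ t : ℝ, {h : H | h ≠ 0 ∧ S₂ h ≤ t} ⊆
      ↑(Submodule.span (ZMod 2) (b₂ '' {i : Fin β | S₂ (b₂ i) ≤ t}))) :
    ∀ i j : Fin β,
      (j : ℕ) + 1 = sInf {n : ℕ | psiFilt b₁ ((i : ℕ) + 1) ≤ psiFilt b₂ n} →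
      S₂ (b₂ j) ≤ S₁ (b₁ i) + ε := by
  intro i j hj
  by_contra! hlt
  have hS₂ : ∀ l : Fin β, (l : ℕ) < i + 1 → S₂ (b₁ l) ≤ S₁ (b₁ i) + ε := fun l hl => by
    have hl : S₁ (b₁ l) ≤ S₁ (b₁ i) := hsort₁ (Fin.le_iff_val_le_val.mpr (Nat.lt_succ_iff.mp hl))
    linarith [(abs_le.mp (hpt (b₁ l))).1]
  have hcover : psiFilt b₁ (i + 1) ≤ psiFilt b₂ j :=
    le_trans (psiFilt_le_iff.mpr fun l hl => hfact2₂ _ ⟨b₁.ne_zero l, hS₂ l hl⟩)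
      (span_sublevel_le_psiFilt hsort₂ hlt)
  have : (j : ℕ) + 1 ≤ j := hj ▸ Nat.sInf_le (show (j : ℕ) ∈ _ from hcover)
  omega

/-- Upper bound half of filtration stability: if `ψ²ⱼ` is the projection of
`ψ¹ᵢ` onto the second filtration, then `S²(ψ²ⱼ) ≤ S¹(ψ¹ᵢ) + ε`. -/
theorem filtration_stability_upper {H : Type*} [AddCommGroup H] [Module (ZMod 2) H] {β : ℕ}
    (S₁ S₂ : H → ℝ) (ε : ℝ)
    (hpt : ∀ h : H, |S₁ h - S₂ h| ≤ ε)
    (b₁ b₂ : Module.Basis (Fin β) (ZMod 2) H)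
    (hsort₁ : Monotone fun i => S₁ (b₁ i))
    (hsort₂ : Monotone fun i => S₂ (b₂ i))
    (hfact1₁ : ∀ j : Fin β,
      b₁ j ∉ Submodule.span (ZMod 2) {h : H | h ≠ 0 ∧ S₁ h < S₁ (b₁ j)})
    (hfact1₂ : ∀ j : Fin β,
      b₂ j ∉ Submodule.span (ZMod 2) {h : H | h ≠ 0 ∧ S₂ h < S₂ (b₂ j)})
    (hfact2₁ : ∀ t : ℝ, {h : H | h ≠ 0 ∧ S₁ h ≤ t} ⊆
      ↑(Submodule.span (ZMod 2) (b₁ '' {i : Fin β | S₁ (b₁ i) ≤ t})))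
    (hfact2₂ : ∀ t : ℝ, {h : H | h ≠ 0 ∧ S₂ h ≤ t} ⊆
      ↑(Submodule.span (ZMod 2) (b₂ '' {i : Fin β | S₂ (b₂ i) ≤ t}))) :
    ∀ i j : Fin β,
      (j : ℕ) + 1 = sInf {n : ℕ | psiFilt b₁ ((i : ℕ) + 1) ≤ psiFilt b₂ n} →
      S₂ (b₂ j) ≤ S₁ (b₁ i) + ε :=
  filtration_stability_upper_general S₁ S₂ ε hpt b₁ b₂ hsort₁ hsort₂ hfact2₂
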